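/- arXiv:2403.13125 — 2 statements merged into one kernel-verified Lean document; each statement's English description precedes it below -/
import Mathlib

section
/- Let Z and X be finite types, let π be a pmf on Z with π z > 0 for all z, and for each z : Z let p_z and q_z be pmfs on X with q_z x > 0 for all x. Define the mixture pmfs p and q on X by p x = ∑ z, π z * p_z x and q x = ∑ z, π z * q_z x. Then H(p, q) ≤ ∑ z, π z * H(p_z, q_z) + H(π), where H(π) = -∑ z, π z * Real.log (π z) is the entropy of the mixing weights. -/
/-!
Writing `q x = ∑ z, π z * q_z x`, each summand `π z * q_z x` is at most `q x`, so
`-log (q x) ≤ -log (π z) - log (q_z x)`. Weighting this by `π z * p_z x` and summing over `z`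
and `x` gives the bound: the `log (q_z x)` terms assemble into the cross-entropies `H(p_z, q_z)`,
and since each `p_z` sums to one, the `log (π z)` terms assemble into `H(π)`.
-/

open Finset

lemma sum_mul_neg_log_sum_le {ι : Type*} (s : Finset ι) (c a : ι → ℝ)
    (hc : ∀ i ∈ s, 0 ≤ c i) (ha : ∀ i ∈ s, 0 < a i) :
    (∑ i ∈ s, c i) * -Real.log (∑ i ∈ s, a i) ≤ ∑ i ∈ s, c i * -Real.log (a i) := by
  rw [sum_mul]
  refine sum_le_sum fun i hi => mul_le_mul_of_nonneg_left ?_ (hc i hi)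
  exact neg_le_neg <| Real.log_le_log (ha i hi) <|
    single_le_sum (fun j hj => (ha j hj).le) hi

lemma sum_sum_mul_neg_log_mul {Z X : Type*} [Fintype Z] [Fintype X]
    (w : Z → ℝ) (hw : ∀ z, w z ≠ 0) (p q : Z → X → ℝ) (hq : ∀ z x, q z x ≠ 0)
    (hp1 : ∀ z, ∑ x, p z x = 1) :
    ∑ z, ∑ x, w z * p z x * -Real.log (w z * q z x) =
      ∑ z, w z * (-∑ x, p z x * Real.log (q z x)) + (-∑ z, w z * Real.log (w z)) := by
  rw [← sum_neg_distrib, ← sum_add_distrib]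
  refine sum_congr rfl fun z _ => ?_
  calc ∑ x, w z * p z x * -Real.log (w z * q z x)
      = ∑ x, (w z * -(p z x * Real.log (q z x)) + -(w z * Real.log (w z)) * p z x) :=
        sum_congr rfl fun x _ => by rw [Real.log_mul (hw z) (hq z x)]; ring
    _ = _ := by rw [sum_add_distrib, ← mul_sum, ← mul_sum, hp1, mul_one, sum_neg_distrib]

theorem cross_entropy_mixture_bound_general
    {Z X : Type*} [Fintype Z] [Fintype X]
    (π : Z → ℝ) (hπpos : ∀ z, 0 < π z)
    (p q : Z → X → ℝ)
    (hp0 : ∀ z x, 0 ≤ p z x) (hp1 : ∀ z, ∑ x, p z x = 1)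
    (hq0 : ∀ z x, 0 < q z x) :
    -∑ x, (∑ z, π z * p z x) * Real.log (∑ z, π z * q z x) ≤
      ∑ z, π z * (-∑ x, p z x * Real.log (q z x)) +
        (-∑ z, π z * Real.log (π z)) := by
  calc -∑ x, (∑ z, π z * p z x) * Real.log (∑ z, π z * q z x)
      = ∑ x, (∑ z, π z * p z x) * -Real.log (∑ z, π z * q z x) := by
        simp only [mul_neg, sum_neg_distrib]
    _ ≤ ∑ x, ∑ z, π z * p z x * -Real.log (π z * q z x) :=
        sum_le_sum fun x _ => sum_mul_neg_log_sum_le _ _ _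
          (fun z _ => mul_nonneg (hπpos z).le (hp0 z x))
          (fun z _ => mul_pos (hπpos z) (hq0 z x))
    _ = _ := by
        rw [sum_comm]
        exact sum_sum_mul_neg_log_mul π (fun z => (hπpos z).ne') p q
          (fun z x => (hq0 z x).ne') hp1

/-- For mixtures p x = ∑ z, π z * p_z x and q x = ∑ z, π z * q_z x,
H(p, q) ≤ ∑ z, π z * H(p_z, q_z) + H(π). -/
theorem cross_entropy_mixture_bound
    {Z X : Type*} [Fintype Z] [Fintype X]
    (π : Z → ℝ) (hπpos : ∀ z, 0 < π z) (hπsum : ∑ z, π z = 1)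
    (p q : Z → X → ℝ)
    (hp0 : ∀ z x, 0 ≤ p z x) (hp1 : ∀ z, ∑ x, p z x = 1)
    (hq0 : ∀ z x, 0 < q z x) (hq1 : ∀ z, ∑ x, q z x = 1) :
    -∑ x, (∑ z, π z * p z x) * Real.log (∑ z, π z * q z x) ≤
      ∑ z, π z * (-∑ x, p z x * Real.log (q z x)) +
        (-∑ z, π z * Real.log (π z)) :=
  cross_entropy_mixture_bound_general π hπpos p q hp0 hp1 hq0
end

section
/- Let Z (latent states), ι (buckets), and X' (unconstrained variables) be finite types, and for each B : ι let X B be a finite type. Given a pmf w on Z, for each z : Z a pmf p' z on X', and for each z : Z and B : ι pmfs pB z B and qB z B on X B, define pmfs p and q on X' × (Π B : ι, X B) by p (x', x) = ∑ z, w z * p' z x' * ∏ B, pB z B (x B) and q (x', x) = ∑ z, w z * p' z x' * ∏ B, qB z B (x B). Assume w z > 0 for all z, p' z x' > 0 for all z and x', pB z B y > 0 for all z, B, y, and qB z B y > 0 for all z, B, y. Then KL(p ‖ q) ≤ ∑ B, ∑ z, w z * H(pB z B, qB z B) + H(r) - H(p), where r is the pmf on Z × X' defined by r (z, x') = w z *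 p' z x'. -/
/-!
Write `a z` and `b z` for the `z`-th summands of `p` and `q`, so that `p = ∑ z, a z` and
`q = ∑ z, b z`. Since `b z ≤ q` and `a z ≥ 0`, monotonicity of `log` gives
`H(p, q) ≤ -∑ a z * log (b z)`. The right-hand side is computed exactly: `log (b z)` splits into
`log (r z x')` plus the `log (qB z B (x B))`, and under each component the blocks are
independent with marginals `pB z B`, which yields `H(r) + ∑ B, ∑ z, w z * H(pB z B, qB z B)`.
-/

open Finset Real

lemma Finset.sum_mul_log_le_sum_mul_log_sum {α : Type*} (s : Finset α) {a b : α → ℝ}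
    (ha : ∀ i ∈ s, 0 ≤ a i) (hb : ∀ i ∈ s, 0 < b i) :
    ∑ i ∈ s, a i * log (b i) ≤ (∑ i ∈ s, a i) * log (∑ i ∈ s, b i) := by
  rw [sum_mul]
  gcongr with i hi
  exacts [ha i hi, hb i hi, single_le_sum (fun j hj => (hb j hj).le) hi]

section Pi

variable {ι : Type*} [Fintype ι] [DecidableEq ι] {X : ι → Type*} [∀ i, Fintype (X i)]

lemma Fintype.sum_pi_prod_mul_apply {f : ∀ i, X i → ℝ} (hf : ∀ i, ∑ y, f i y = 1) (i : ι)
    (g : X i → ℝ) :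
    ∑ x : ∀ i, X i, (∏ j, f j (x j)) * g (x i) = ∑ y, f i y * g y := by
  set F := Function.update f i (fun y => f i y * g y)
  have hF : ∀ j : {j // j ≠ i}, F j = f j := fun j => Function.update_of_ne j.2 _ _
  have hFi : ∀ x : ∀ i, X i, (∏ j, f j (x j)) * g (x i) = ∏ j, F j (x j) := by
    intro x
    rw [Fintype.prod_eq_mul_prod_subtype_ne _ i, Fintype.prod_eq_mul_prod_subtype_ne _ i]
    simp only [F, Function.update_self, hF]
    ring
  calc ∑ x : ∀ i, X i, (∏ j, f j (x j)) * g (x i)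
      = ∏ j, ∑ y, F j y := by simp only [hFi, Fintype.prod_sum]
    _ = ∑ y, f i y * g y := by
      rw [Fintype.prod_eq_mul_prod_subtype_ne _ i]
      simp only [F, Function.update_self, hF, hf, prod_const_one, mul_one]

lemma Fintype.sum_pi_prod_mul_sum_apply {f : ∀ i, X i → ℝ} (hf : ∀ i, ∑ y, f i y = 1)
    (g : ∀ i, X i → ℝ) :
    ∑ x : ∀ i, X i, (∏ j, f j (x j)) * ∑ i, g i (x i) = ∑ i, ∑ y, f i y * g i y := by
  simp only [mul_sum]
  rw [sum_comm]
  exact Finset.sum_congr rfl fun i _ => sum_pi_prod_mul_apply hf i (g i)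

lemma Fintype.sum_pi_prod_mul_log_prod {c : ℝ} (hc : 0 < c) {f g : ∀ i, X i → ℝ}
    (hf : ∀ i, ∑ y, f i y = 1) (hg : ∀ i y, 0 < g i y) :
    ∑ x : ∀ i, X i, (c * ∏ i, f i (x i)) * log (c * ∏ i, g i (x i)) =
      c * log c + c * ∑ i, ∑ y, f i y * log (g i y) := by
  have hlog : ∀ x : ∀ i, X i,
      log (c * ∏ i, g i (x i)) = log c + ∑ i, log (g i (x i)) := fun x => by
    rw [log_mul hc.ne' (prod_pos fun i _ => hg i (x i)).ne',
      log_prod fun i _ => (hg i (x i)).ne']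
  have hmass : ∑ x : ∀ i, X i, ∏ i, f i (x i) = 1 := by
    rw [← Fintype.prod_sum, Finset.prod_eq_one fun i _ => hf i]
  calc ∑ x : ∀ i, X i, (c * ∏ i, f i (x i)) * log (c * ∏ i, g i (x i))
      = c * log c * ∑ x : ∀ i, X i, ∏ i, f i (x i) +
          c * ∑ x : ∀ i, X i, (∏ i, f i (x i)) * ∑ i, log (g i (x i)) := by
        rw [mul_sum, mul_sum, ← sum_add_distrib]
        exact Finset.sum_congr rfl fun x _ => by rw [hlog]; ring
    _ = c * log c + c * ∑ i, ∑ y, f i y * log (g i y) := by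
        rw [hmass, sum_pi_prod_mul_sum_apply hf fun i y => log (g i y), mul_one]

end Pi

theorem pc_kl_divergence_bound_general
    {Z ι X' : Type*} [Fintype Z] [Fintype ι] [Fintype X'] [DecidableEq ι]
    (X : ι → Type*) [∀ B, Fintype (X B)]
    (w : Z → ℝ) (hw0 : ∀ z, 0 < w z)
    (p' : Z → X' → ℝ) (hp'0 : ∀ z x', 0 < p' z x') (hp'1 : ∀ z, ∑ x', p' z x' = 1)
    (pB qB : Z → ∀ B, X B → ℝ)
    (hpB0 : ∀ z B y, 0 < pB z B y) (hpB1 : ∀ z B, ∑ y, pB z B y = 1)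
    (hqB0 : ∀ z B y, 0 < qB z B y) :
    ((-∑ x' : X', ∑ x : (∀ B, X B),
        (∑ z, w z * p' z x' * ∏ B, pB z B (x B)) *
          Real.log (∑ z, w z * p' z x' * ∏ B, qB z B (x B))) -
      (-∑ x' : X', ∑ x : (∀ B, X B),
        (∑ z, w z * p' z x' * ∏ B, pB z B (x B)) *
          Real.log (∑ z, w z * p' z x' * ∏ B, pB z B (x B)))) ≤
      ∑ B, ∑ z, w z * (-∑ y, pB z B y * Real.log (qB z B y)) +
        (-∑ z, ∑ x', (w z * p' z x') * Real.log (w z * p' z x')) -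
        (-∑ x' : X', ∑ x : (∀ B, X B),
          (∑ z, w z * p' z x' * ∏ B, pB z B (x B)) *
            Real.log (∑ z, w z * p' z x' * ∏ B, pB z B (x B))) := by
  have hr : ∀ z x', 0 < w z * p' z x' := fun z x' => mul_pos (hw0 z) (hp'0 z x')
  have hmix : ∀ x' (x : ∀ B, X B),
      ∑ z, (w z * p' z x' * ∏ B, pB z B (x B)) * log (w z * p' z x' * ∏ B, qB z B (x B)) ≤
        (∑ z, w z * p' z x' * ∏ B, pB z B (x B)) *
          log (∑ z, w z * p' z x' * ∏ B, qB z B (x B)) := fun x' x =>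
    sum_mul_log_le_sum_mul_log_sum univ
      (fun z _ => (mul_pos (hr z x') (prod_pos fun B _ => hpB0 z B (x B))).le)
      (fun z _ => mul_pos (hr z x') (prod_pos fun B _ => hqB0 z B (x B)))
  have hjoint : ∑ x', ∑ x : ∀ B, X B, ∑ z,
        (w z * p' z x' * ∏ B, pB z B (x B)) * log (w z * p' z x' * ∏ B, qB z B (x B)) =
      ∑ z, ∑ x', (w z * p' z x') * log (w z * p' z x') +
        ∑ B, ∑ z, w z * ∑ y, pB z B y * log (qB z B y) := by
    calc _ = ∑ z, ∑ x', ∑ x : ∀ B, X B,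
          (w z * p' z x' * ∏ B, pB z B (x B)) * log (w z * p' z x' * ∏ B, qB z B (x B)) := by
          exact (Finset.sum_congr rfl fun _ _ => sum_comm).trans sum_comm
      _ = ∑ z, (∑ x', (w z * p' z x') * log (w z * p' z x') +
            (∑ x', p' z x') * (w z * ∑ B, ∑ y, pB z B y * log (qB z B y))) := by
          refine Finset.sum_congr rfl fun z _ => ?_
          simp only [Fintype.sum_pi_prod_mul_log_prod (hr z _) (hpB1 z) (hqB0 z),
            sum_add_distrib, sum_mul]
          congr 1
          exact Finset.sum_congr rfl fun _ _ => by ring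
      _ = _ := by
          rw [sum_add_distrib]
          simp only [hp'1, one_mul, mul_sum]
          exact congrArg _ sum_comm
  simp only [mul_neg, sum_neg_distrib]
  linarith [sum_le_sum fun x' (_ : x' ∈ univ) => sum_le_sum fun x (_ : x ∈ univ) => hmix x' x]

/-- corollary of Theorem 1 of the paper:
KL(p ‖ q) ≤ ∑ B, ∑ z, w z * H(pB z B, qB z B) + H(r) - H(p),
where KL(p ‖ q) = H(p, q) - H(p) and r (z, x') = w z * p' z x'. -/
theorem pc_kl_divergence_bound
    {Z ι X' : Type*} [Fintype Z] [Fintype ι] [Fintype X'] [DecidableEq ι]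
    (X : ι → Type*) [∀ B, Fintype (X B)]
    (w : Z → ℝ) (hw0 : ∀ z, 0 < w z) (hw1 : ∑ z, w z = 1)
    (p' : Z → X' → ℝ) (hp'0 : ∀ z x', 0 < p' z x') (hp'1 : ∀ z, ∑ x', p' z x' = 1)
    (pB qB : Z → ∀ B, X B → ℝ)
    (hpB0 : ∀ z B y, 0 < pB z B y) (hpB1 : ∀ z B, ∑ y, pB z B y = 1)
    (hqB0 : ∀ z B y, 0 < qB z B y) (hqB1 : ∀ z B, ∑ y, qB z B y = 1) :
    ((-∑ x' : X', ∑ x : (∀ B, X B),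
        (∑ z, w z * p' z x' * ∏ B, pB z B (x B)) *
          Real.log (∑ z, w z * p' z x' * ∏ B, qB z B (x B))) -
      (-∑ x' : X', ∑ x : (∀ B, X B),
        (∑ z, w z * p' z x' * ∏ B, pB z B (x B)) *
          Real.log (∑ z, w z * p' z x' * ∏ B, pB z B (x B)))) ≤
      ∑ B, ∑ z, w z * (-∑ y, pB z B y * Real.log (qB z B y)) +
        (-∑ z, ∑ x', (w z * p' z x') * Real.log (w z * p' z x')) -
        (-∑ x' : X', ∑ x : (∀ B, X B),
          (∑ z, w z * p' z x' * ∏ B, pB z B (x B)) *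
            Real.log (∑ z, w z * p' z x' * ∏ B, pB z B (x B))) :=
  pc_kl_divergence_bound_general X w hw0 p' hp'0 hp'1 pB qB hpB0 hpB1 hqB0
end
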